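/- Under the assumptions and constructions of the first equivalent form (condition Σ_r ≥ (m−1)‖r_k‖₁ + s for all k, extended marginals r̄_k^{(1)}, extended cost C̄^{(1)} with 0 = A_1 < A_2 < … < A_m), every minimizer X̄* of ⟨C̄^{(1)}, ·⟩ over Π(r̄_1^{(1)},…,r̄_m^{(1)}) places exactly mass s on the zeroth layer: Σ_{v ∈ T_∅} X̄*_v = s. -/

import Mathlib

open Finset

noncomputable section

namespace MPOT

/-- The `k`-th marginal of a tensor indexed by `[n]^m` (functions `Fin m → Fin n`). -/
def marg {m n : ℕ} (X : (Fin m → Fin n) → ℝ) (k : Fin m) (j : Fin n) : ℝ :=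
  ∑ v : Fin m → Fin n, if v k = j then X v else 0

/-- Entrywise (Frobenius) inner product of tensors. -/
def dot {m n : ℕ} (C X : (Fin m → Fin n) → ℝ) : ℝ :=
  ∑ v : Fin m → Fin n, C v * X v

/-- The partial transport polytope `Π^s(r_1, …, r_m)`. -/
def PiPartial {m n : ℕ} (r : Fin m → Fin n → ℝ) (s : ℝ) :
    Set ((Fin m → Fin n) → ℝ) :=
  {X | (∀ v, 0 ≤ X v) ∧ (∀ k j, marg X k j ≤ r k j) ∧ ∑ v : Fin m → Fin n, X v = s}

/-- The transport polytope `Π(a_1, …, a_m)` with equality marginal constraints. -/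
def PiEq {m n : ℕ} (a : Fin m → Fin n → ℝ) : Set ((Fin m → Fin n) → ℝ) :=
  {X | (∀ v, 0 ≤ X v) ∧ ∀ k j, marg X k j = a k j}

/-- Embedding of `[n]^m` into `[n+1]^m`. -/
def emb {m n : ℕ} (v : Fin m → Fin n) : Fin m → Fin (n + 1) :=
  fun i => (v i).castSucc

/-- Restriction of a tensor on `[n+1]^m` to the indices in `[n]^m`. -/
def restr {m n : ℕ} (X : (Fin m → Fin (n + 1)) → ℝ) : (Fin m → Fin n) → ℝ :=
  fun v => X (emb v)

/-- The number of coordinates of `u` equal to `n+1` (i.e. `Fin.last n`); `u ∈ T_S`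
with `|S| = nLast u`. -/
def nLast {m n : ℕ} (u : Fin m → Fin (n + 1)) : ℕ :=
  (univ.filter fun ℓ => u ℓ = Fin.last n).card

/-- Extended cost tensor: the original cost on `T_∅ = [n]^m`, and value `A i` on the
`i`-th layer `∪_{|S| = i} T_S`. -/
def extCost {m n : ℕ} (C : (Fin m → Fin n) → ℝ) (A : ℕ → ℝ) :
    (Fin m → Fin (n + 1)) → ℝ :=
  fun u =>
    if h : ∀ i, u i ≠ Fin.last n then C fun i => (u i).castPred (h i)
    else A (nLast u)

/-- Total mass of `X` on the sublayer `T_S`. -/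
def layerSum {m n : ℕ} (X : (Fin m → Fin (n + 1)) → ℝ) (S : Finset (Fin m)) : ℝ :=
  ∑ u : Fin m → Fin (n + 1), if ∀ ℓ, (u ℓ = Fin.last n ↔ ℓ ∈ S) then X u else 0

/-- First-form extended marginals `r̄_k^{(1)} = [r_k, Σ_r/(m−1) − ‖r_k‖₁ − s/(m−1)]`. -/
def extMarg1 {m n : ℕ} (r : Fin m → Fin n → ℝ) (s : ℝ) : Fin m → Fin (n + 1) → ℝ :=
  fun k => Fin.snoc (r k)
    ((∑ i, ∑ j, r i j) / ((m : ℝ) - 1) - (∑ j, r k j) - s / ((m : ℝ) - 1))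

/-- Second-form extended marginals `r̄_k^{(2)} = [r_k, Σ_{i≠k} ‖r_i‖₁ − (m−1)s]`. -/
def extMarg2 {m n : ℕ} (r : Fin m → Fin n → ℝ) (s : ℝ) : Fin m → Fin (n + 1) → ℝ :=
  fun k => Fin.snoc (r k) ((∑ i ∈ univ.erase k, ∑ j, r i j) - ((m : ℝ) - 1) * s)

end MPOT

/-!
Every marginal of `X̄` has mass `(Σ_r − s)/(m − 1)`, while the `m` entries at the extra index
`n + 1` add up to `m (Σ_r − s)/(m − 1) − Σ_r`. The first counts each `u ∈ T_S` once, the second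
`|S|` times, so `Σ_u (|S(u)| − 1) X̄_u = −s`.

An optimal `X̄` cannot charge both `T_∅` and a layer `|S| = i ≥ 2`: exchanging an artificial
coordinate of a point `u` of that layer with the same coordinate of a point `v ∈ T_∅` keeps all
marginals and moves mass from layers `i, 0` to layers `i − 1, 1`, which changes the cost by
`A_{i−1} + A_1 − A_i − C_v < 0`. If no mass lies on the layers `|S| ≥ 2`, the identity reads
`−X̄(T_∅) = −s`; if none lies on `T_∅`, its left side is nonnegative, so `s = 0 = X̄(T_∅)`.
-/

namespace MPOT

section Marginals

variable {m n : ℕ}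

lemma marg_eq_sum_filter (X : (Fin m → Fin n) → ℝ) (k : Fin m) (j : Fin n) :
    marg X k j = ∑ v ∈ univ.filter (fun v => v k = j), X v :=
  (sum_filter _ _).symm

lemma marg_add (X Y : (Fin m → Fin n) → ℝ) (k : Fin m) (j : Fin n) :
    marg (X + Y) k j = marg X k j + marg Y k j := by
  simp only [marg_eq_sum_filter, Pi.add_apply, sum_add_distrib]

lemma marg_sub (X Y : (Fin m → Fin n) → ℝ) (k : Fin m) (j : Fin n) :
    marg (X - Y) k j = marg X k j - marg Y k j := by
  simp only [marg_eq_sum_filter, Pi.sub_apply, sum_sub_distrib]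

lemma marg_smul (c : ℝ) (X : (Fin m → Fin n) → ℝ) (k : Fin m) (j : Fin n) :
    marg (c • X) k j = c * marg X k j := by
  simp only [marg_eq_sum_filter, Pi.smul_apply, smul_eq_mul, mul_sum]

lemma marg_single (a : Fin m → Fin n) (k : Fin m) (j : Fin n) :
    marg (Pi.single a 1) k j = if a k = j then 1 else 0 := by
  simp [marg_eq_sum_filter, Pi.single_apply]

lemma sum_marg (X : (Fin m → Fin n) → ℝ) (k : Fin m) :
    ∑ j, marg X k j = ∑ v, X v := by
  simp only [marg]
  rw [sum_comm]
  simp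

lemma dot_add (C X Y : (Fin m → Fin n) → ℝ) : dot C (X + Y) = dot C X + dot C Y := by
  simp only [dot, Pi.add_apply, mul_add, sum_add_distrib]

lemma dot_sub (C X Y : (Fin m → Fin n) → ℝ) : dot C (X - Y) = dot C X - dot C Y := by
  simp only [dot, Pi.sub_apply, mul_sub, sum_sub_distrib]

lemma dot_smul (C X : (Fin m → Fin n) → ℝ) (c : ℝ) : dot C (c • X) = c * dot C X := by
  simp only [dot, Pi.smul_apply, smul_eq_mul, mul_sum]
  exact sum_congr rfl fun _ _ => by ring

lemma dot_single (C : (Fin m → Fin n) → ℝ) (a : Fin m → Fin n) :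
    dot C (Pi.single a 1) = C a := by
  simp [dot, Pi.single_apply]

end Marginals

section Exchange

variable {m n : ℕ}

def swapDirection (u w : Fin m → Fin n) (l : Fin m) : (Fin m → Fin n) → ℝ :=
  Pi.single (Function.update u l (w l)) 1 + Pi.single (Function.update w l (u l)) 1
    - Pi.single u 1 - Pi.single w 1

lemma marg_swapDirection (u w : Fin m → Fin n) (l k : Fin m) (j : Fin n) :
    marg (swapDirection u w l) k j = 0 := by
  simp only [swapDirection, marg_sub, marg_add, marg_single]
  rcases eq_or_ne k l with rfl | hkl
  · simp only [Function.update_self]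
    ring
  · simp only [Function.update_of_ne hkl]
    ring

lemma dot_swapDirection (C : (Fin m → Fin n) → ℝ) (u w : Fin m → Fin n) (l : Fin m) :
    dot C (swapDirection u w l) =
      C (Function.update u l (w l)) + C (Function.update w l (u l)) - C u - C w := by
  simp only [swapDirection, dot_sub, dot_add, dot_single]

lemma add_smul_swapDirection_mem_PiEq {a : Fin m → Fin n → ℝ} {X : (Fin m → Fin n) → ℝ}
    (hX : X ∈ PiEq a) {u w : Fin m → Fin n} (huw : u ≠ w) (l : Fin m) {δ : ℝ}
    (hδ : 0 ≤ δ) (hδu : δ ≤ X u) (hδw : δ ≤ X w) :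
    X + δ • swapDirection u w l ∈ PiEq a := by
  refine ⟨fun v => ?_, fun k j => ?_⟩
  · have hsingle (x : Fin m → Fin n) : 0 ≤ (Pi.single x 1 : (Fin m → Fin n) → ℝ) v := by
      rw [Pi.single_apply]
      split_ifs <;> norm_num
    have hremoved : δ * ((Pi.single u 1 : (Fin m → Fin n) → ℝ) v
        + (Pi.single w 1 : (Fin m → Fin n) → ℝ) v) ≤ X v := by
      by_cases hvu : v = u
      · subst hvu
        simpa [huw] using hδu
      by_cases hvw : v = w
      · subst hvw
        simpa [hvu] using hδw
      · simpa [hvu, hvw] using hX.1 v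
    simp only [swapDirection, Pi.add_apply, Pi.sub_apply, Pi.smul_apply, smul_eq_mul]
    nlinarith [hsingle (Function.update u l (w l)), hsingle (Function.update w l (u l))]
  · rw [marg_add, marg_smul, marg_swapDirection, mul_zero, add_zero, hX.2]

end Exchange

section Layers

variable {m n : ℕ}

lemma nLast_eq_zero_iff {u : Fin m → Fin (n + 1)} : nLast u = 0 ↔ ∀ i, u i ≠ Fin.last n := by
  simp [nLast, filter_eq_empty_iff]

lemma nLast_le (u : Fin m → Fin (n + 1)) : nLast u ≤ m := by
  simpa [nLast] using card_filter_le univ fun ℓ => u ℓ = Fin.last n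

lemma nLast_emb (v : Fin m → Fin n) : nLast (emb v) = 0 :=
  nLast_eq_zero_iff.2 fun i => (Fin.castSucc_lt_last (v i)).ne

lemma emb_injective : Function.Injective (emb : (Fin m → Fin n) → Fin m → Fin (n + 1)) :=
  fun _ _ h => funext fun i => Fin.castSucc_injective _ (congrFun h i)

lemma exists_emb_eq_iff {u : Fin m → Fin (n + 1)} : (∃ v, emb v = u) ↔ nLast u = 0 := by
  refine ⟨?_, fun hu => ?_⟩
  · rintro ⟨v, rfl⟩
    exact nLast_emb v
  · have hu := nLast_eq_zero_iff.1 hu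
    exact ⟨fun i => (u i).castPred (hu i), funext fun i => Fin.castSucc_castPred _ _⟩

lemma image_emb_univ :
    univ.image (emb : (Fin m → Fin n) → Fin m → Fin (n + 1)) = univ.filter (nLast · = 0) := by
  ext u
  simp [exists_emb_eq_iff]

lemma sum_emb (X : (Fin m → Fin (n + 1)) → ℝ) :
    ∑ v, X (emb v) = ∑ u with nLast u = 0, X u := by
  rw [← image_emb_univ, sum_image fun _ _ _ _ h => emb_injective h]

lemma nLast_update_of_eq_last {u : Fin m → Fin (n + 1)} {l : Fin m} (hl : u l = Fin.last n)
    {x : Fin (n + 1)} (hx : x ≠ Fin.last n) : nLast (Function.update u l x) = nLast u - 1 := by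
  have hfilter : univ.filter (fun i => Function.update u l x i = Fin.last n)
      = (univ.filter fun i => u i = Fin.last n).erase l := by
    ext i
    rcases eq_or_ne i l with rfl | hil
    · simp [hx]
    · simp [hil]
  rw [nLast, hfilter, card_erase_of_mem (by simpa using hl), nLast]

lemma nLast_update_last {u : Fin m → Fin (n + 1)} {l : Fin m} (hl : u l ≠ Fin.last n) :
    nLast (Function.update u l (Fin.last n)) = nLast u + 1 := by
  have hfilter : univ.filter (fun i => Function.update u l (Fin.last n) i = Fin.last n)
      = insert l (univ.filter fun i => u i = Fin.last n) := by
    ext i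
    rcases eq_or_ne i l with rfl | hil
    · simp
    · simp [hil]
  rw [nLast, hfilter, card_insert_of_notMem (by simpa using hl), nLast]

lemma extCost_emb (C : (Fin m → Fin n) → ℝ) (A : ℕ → ℝ) (v : Fin m → Fin n) :
    extCost C A (emb v) = C v := by
  rw [extCost, dif_pos (nLast_eq_zero_iff.1 (nLast_emb v))]
  rfl

lemma extCost_of_nLast_ne_zero (C : (Fin m → Fin n) → ℝ) (A : ℕ → ℝ)
    {u : Fin m → Fin (n + 1)} (hu : nLast u ≠ 0) : extCost C A u = A (nLast u) := by
  rw [extCost, dif_neg (mt nLast_eq_zero_iff.2 hu)]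

lemma sum_nLast_mul (X : (Fin m → Fin (n + 1)) → ℝ) :
    ∑ u, (nLast u : ℝ) * X u = ∑ k, marg X k (Fin.last n) := by
  simp only [marg]
  rw [sum_comm]
  refine sum_congr rfl fun u _ => ?_
  rw [sum_ite, sum_const, sum_const_zero, add_zero, nsmul_eq_mul, nLast]

lemma sum_nLast_sub_one_mul_eq_neg_sum_emb {X : (Fin m → Fin (n + 1)) → ℝ}
    (hX : ∀ u, 2 ≤ nLast u → X u = 0) :
    ∑ u, ((nLast u : ℝ) - 1) * X u = -∑ v, X (emb v) := by
  rw [sum_emb, sum_filter, ← sum_neg_distrib]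
  refine sum_congr rfl fun u _ => ?_
  rcases (by omega : nLast u = 0 ∨ nLast u = 1 ∨ 2 ≤ nLast u) with h | h | h
  · simp [h]
  · simp [h]
  · simp [hX u h, show nLast u ≠ 0 by omega]

lemma sum_nLast_sub_one_mul_nonneg {X : (Fin m → Fin (n + 1)) → ℝ} (hX0 : ∀ u, 0 ≤ X u)
    (hX : ∀ v, X (emb v) = 0) : 0 ≤ ∑ u, ((nLast u : ℝ) - 1) * X u := by
  refine sum_nonneg fun u _ => ?_
  rcases Nat.eq_zero_or_pos (nLast u) with h | h
  · obtain ⟨v, rfl⟩ := exists_emb_eq_iff.2 h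
    simp [hX v]
  · exact mul_nonneg (sub_nonneg.2 (by exact_mod_cast h)) (hX0 u)

end Layers

section Optimality

variable {m n : ℕ} (C : (Fin m → Fin n) → ℝ) (A : ℕ → ℝ)

lemma exists_mem_PiEq_dot_extCost_lt (hC : ∀ v, 0 ≤ C v) (hA1 : A 1 = 0)
    (hA : ∀ i, 1 ≤ i → i < m → A i < A (i + 1))
    {a : Fin m → Fin (n + 1) → ℝ} {X : (Fin m → Fin (n + 1)) → ℝ} (hX : X ∈ PiEq a)
    {u : Fin m → Fin (n + 1)} (hu : 2 ≤ nLast u) (hXu : 0 < X u)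
    {v : Fin m → Fin n} (hXv : 0 < X (emb v)) :
    ∃ Y ∈ PiEq a, dot (extCost C A) Y < dot (extCost C A) X := by
  obtain ⟨l, hl⟩ : ∃ l, u l = Fin.last n := by
    by_contra! h
    have := nLast_eq_zero_iff.2 h
    omega
  have hvl : emb v l ≠ Fin.last n := (Fin.castSucc_lt_last (v l)).ne
  set δ := min (X u) (X (emb v))
  have hδ : 0 < δ := lt_min hXu hXv
  refine ⟨X + δ • swapDirection u (emb v) l, add_smul_swapDirection_mem_PiEq hX
    (fun h : u = emb v => hvl (h ▸ hl)) l hδ.le (min_le_left _ _) (min_le_right _ _), ?_⟩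
  have hcost_u : extCost C A u = A (nLast u) := extCost_of_nLast_ne_zero C A (by omega)
  have hcost_u' : extCost C A (Function.update u l (emb v l)) = A (nLast u - 1) := by
    rw [extCost_of_nLast_ne_zero C A (by rw [nLast_update_of_eq_last hl hvl]; omega),
      nLast_update_of_eq_last hl hvl]
  have hcost_v' : extCost C A (Function.update (emb v) l (u l)) = 0 := by
    rw [hl, extCost_of_nLast_ne_zero C A (by simp [nLast_update_last hvl]),
      nLast_update_last hvl, nLast_emb, zero_add, hA1]
  have hA_lt : A (nLast u - 1) < A (nLast u) := by
    have := hA (nLast u - 1) (by omega) (by have := nLast_le u; omega)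
    rwa [Nat.sub_add_cancel (by omega)] at this
  rw [dot_add, dot_smul, dot_swapDirection, hcost_u, hcost_u', hcost_v', extCost_emb]
  nlinarith [hC v]

lemma forall_emb_eq_zero_or_forall_eq_zero_of_isMinOn (hC : ∀ v, 0 ≤ C v) (hA1 : A 1 = 0)
    (hA : ∀ i, 1 ≤ i → i < m → A i < A (i + 1))
    {a : Fin m → Fin (n + 1) → ℝ} {X : (Fin m → Fin (n + 1)) → ℝ} (hX : X ∈ PiEq a)
    (hmin : IsMinOn (dot (extCost C A)) (PiEq a) X) :
    (∀ v, X (emb v) = 0) ∨ ∀ u, 2 ≤ nLast u → X u = 0 := by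
  by_contra! h
  obtain ⟨⟨v, hv⟩, u, hu, hXu⟩ := h
  obtain ⟨Y, hY, hlt⟩ := exists_mem_PiEq_dot_extCost_lt C A hC hA1 hA hX hu
    ((hX.1 u).lt_of_ne' hXu) ((hX.1 _).lt_of_ne' hv)
  exact (hmin hY).not_gt hlt

end Optimality

section FirstForm

variable {m n : ℕ} (r : Fin m → Fin n → ℝ) (s : ℝ)

lemma sum_extMarg1 (k : Fin m) :
    ∑ j, extMarg1 r s k j = (∑ i, ∑ j, r i j) / ((m : ℝ) - 1) - s / ((m : ℝ) - 1) := by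
  simp only [extMarg1, Fin.sum_univ_castSucc, Fin.snoc_castSucc, Fin.snoc_last]
  ring

lemma sum_extMarg1_last :
    ∑ k, extMarg1 r s k (Fin.last n)
      = m * ((∑ i, ∑ j, r i j) / ((m : ℝ) - 1) - s / ((m : ℝ) - 1)) - ∑ i, ∑ j, r i j := by
  simp only [extMarg1, Fin.snoc_last, sum_sub_distrib, sum_const, card_univ, Fintype.card_fin,
    nsmul_eq_mul]
  ring

lemma sum_nLast_sub_one_mul_of_mem_PiEq (hm : 2 ≤ m) {X : (Fin m → Fin (n + 1)) → ℝ}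
    (hX : X ∈ PiEq (extMarg1 r s)) : ∑ u, ((nLast u : ℝ) - 1) * X u = -s := by
  have hm' : (m : ℝ) - 1 ≠ 0 := by
    have : (2 : ℝ) ≤ m := by exact_mod_cast hm
    linarith
  have htotal : ∑ u, X u = ∑ j, extMarg1 r s ⟨0, by omega⟩ j := by
    simp only [← sum_marg X ⟨0, by omega⟩, hX.2]
  have hweighted : ∑ u, (nLast u : ℝ) * X u = ∑ k, extMarg1 r s k (Fin.last n) := by
    simp only [sum_nLast_mul, hX.2]
  simp only [sub_mul, one_mul, sum_sub_distrib, htotal, hweighted, sum_extMarg1,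
    sum_extMarg1_last]
  field_simp
  ring

end FirstForm

end MPOT

open MPOT

theorem mpot_first_form_mass_on_original_general {m n : ℕ} (hm : 2 ≤ m)
    (C : (Fin m → Fin n) → ℝ) (hC : ∀ v, 0 ≤ C v)
    (r : Fin m → Fin n → ℝ)
    (s : ℝ) (hs0 : 0 ≤ s)
    (A : ℕ → ℝ) (hA1 : A 1 = 0) (hA : ∀ i, 1 ≤ i → i < m → A i < A (i + 1))
    (Xb : (Fin m → Fin (n + 1)) → ℝ) (hmem : Xb ∈ PiEq (extMarg1 r s))
    (hopt : ∀ Y ∈ PiEq (extMarg1 r s), dot (extCost C A) Xb ≤ dot (extCost C A) Y) :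
    (∑ v : Fin m → Fin n, Xb (emb v)) = s := by
  have hmass := sum_nLast_sub_one_mul_of_mem_PiEq r s hm hmem
  rcases forall_emb_eq_zero_or_forall_eq_zero_of_isMinOn C A hC hA1 hA hmem
    (isMinOn_iff.2 hopt) with hlow | hhigh
  · have := sum_nLast_sub_one_mul_nonneg hmem.1 hlow
    simp only [hlow, sum_const_zero]
    linarith
  · linarith [sum_nLast_sub_one_mul_eq_neg_sum_emb hhigh]

/-- Step 3 of the proof of Theorem 3.1: under the assumptions of the first
equivalent form, every minimizer of `⟨C̄^{(1)}, ·⟩` over `Π(r̄_1^{(1)}, …, r̄_m^{(1)})`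
places exactly mass `s` on the zeroth layer `T_∅ = [n]^m`. -/
theorem mpot_first_form_mass_on_original {m n : ℕ} (hm : 2 ≤ m) (hn : 1 ≤ n)
    (C : (Fin m → Fin n) → ℝ) (hC : ∀ v, 0 ≤ C v)
    (r : Fin m → Fin n → ℝ) (hr : ∀ k j, 0 ≤ r k j)
    (s : ℝ) (hs0 : 0 ≤ s) (hs : ∀ k, s ≤ ∑ j, r k j)
    (hcond : ∀ k, ((m : ℝ) - 1) * (∑ j, r k j) + s ≤ ∑ i, ∑ j, r i j)
    (A : ℕ → ℝ) (hA1 : A 1 = 0) (hA : ∀ i, 1 ≤ i → i < m → A i < A (i + 1))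
    (Xb : (Fin m → Fin (n + 1)) → ℝ) (hmem : Xb ∈ PiEq (extMarg1 r s))
    (hopt : ∀ Y ∈ PiEq (extMarg1 r s), dot (extCost C A) Xb ≤ dot (extCost C A) Y) :
    (∑ v : Fin m → Fin n, Xb (emb v)) = s :=
  mpot_first_form_mass_on_original_general hm C hC r s hs0 A hA1 hA Xb hmem hopt
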